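/- For every dimension d ≥ 1, every k ≥ 1, every λ > 0, and every ε > 0, one has a_{k,λ(1+ε)} ≤ a_{k,λ} + ε. -/

import Mathlib

open MeasureTheory ProbabilityTheory Filter

noncomputable instance instDecEqEuclidean (d : ℕ) :
    DecidableEq (EuclideanSpace ℝ (Fin d)) := Classical.decEq _

/-- `maxColorable d k r V` is the maximum number of vertices of the geometric
graph `G_r(V)` (edges between distinct points of `V` at Euclidean distance at
most `r`) that can be properly colored with `k` colors, i.e. the maximum
cardinality of a subset `S ⊆ V` admitting a proper `k`-coloring. -/
noncomputable def maxColorable (d k : ℕ) (r : ℝ)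
    (V : Finset (EuclideanSpace ℝ (Fin d))) : ℕ :=
  sSup {m : ℕ | ∃ S : Finset (EuclideanSpace ℝ (Fin d)), S ⊆ V ∧ S.card = m ∧
    ∃ c : EuclideanSpace ℝ (Fin d) → Fin k,
      ∀ u ∈ S, ∀ v ∈ S, u ≠ v → dist u v ≤ r → c u ≠ c v}

/-- The unit cube `[0,1]^d`. -/
def unitCube (d : ℕ) : Set (EuclideanSpace ℝ (Fin d)) :=
  {x | ∀ i, x i ∈ Set.Icc (0 : ℝ) 1}

/-- The uniform distribution on the unit cube `[0,1]^d` (Lebesgue measure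
restricted to the cube, which has total mass one). -/
noncomputable def uniformCube (d : ℕ) : Measure (EuclideanSpace ℝ (Fin d)) :=
  volume.restrict (unitCube d)

/-- `EH d k r n = E[H_{k,r}(n)] = E[N_{k,r}({X_1,…,X_n})]` for `X_1,…,X_n`
i.i.d. uniform on the unit cube `[0,1]^d`. -/
noncomputable def EH (d k : ℕ) (r : ℝ) (n : ℕ) : ℝ :=
  ∫ x : Fin n → EuclideanSpace ℝ (Fin d),
    (maxColorable d k r (Finset.image x Finset.univ) : ℝ)
    ∂(Measure.pi fun _ => uniformCube d)

/-- `EF d k lam t = E[F_{k,lam}(t)] = ∑_n P(Po(lam t^d) = n) E[H_{k,1/t}(n)]`,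
the expected maximum number of `k`-colorable vertices of the unit-distance
geometric graph on a Poisson process of intensity `lam` in `[0,t]^d`. -/
noncomputable def EF (d k : ℕ) (lam t : ℝ) : ℝ :=
  ∑' n : ℕ, poissonPMFReal (Real.toNNReal (lam * t ^ d)) n * EH d k (1 / t) n

/-- The normalized expectation `\bar F_{k,lam}(t) = E[F_{k,lam}(t)]/(lam t^d)`. -/
noncomputable def Fbar (d k : ℕ) (lam t : ℝ) : ℝ :=
  EF d k lam t / (lam * t ^ d)

/-- The constant `a_{k,lam} = inf_{t>0} \bar F_{k,lam}(t)`. -/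
noncomputable def aConst (d k : ℕ) (lam : ℝ) : ℝ :=
  sInf {x : ℝ | ∃ t : ℝ, 0 < t ∧ x = Fbar d k lam t}

/-- The volume `V_d(r) = π^{d/2} r^d / Γ(d/2 + 1)` of the `d`-dimensional
Euclidean ball of radius `r`. -/
noncomputable def ballVol (d : ℕ) (r : ℝ) : ℝ :=
  Real.pi ^ ((d : ℝ) / 2) * r ^ d / Real.Gamma ((d : ℝ) / 2 + 1)

/-!
`F̄_{k,λ}(t)` depends on `λ` and `t` only through the Poisson mean `λ t^d` and the edge length
`1/t`. Replacing `(λ, t)` by `(λ', t')` with `λ' ≥ λ` and `λ' t'^d = λ t^d` leaves the number of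
points unchanged in law but forces `t' ≤ t`, i.e. longer edges, and longer edges can only shrink
the largest `k`-colourable set. Hence `a_{k,λ}` is nonincreasing in `λ`, which is stronger than
the claim.
-/

open Finset

section Coloring

variable {d k : ℕ} {r : ℝ}

lemma le_maxColorable {V S : Finset (EuclideanSpace ℝ (Fin d))} (hSV : S ⊆ V)
    (c : EuclideanSpace ℝ (Fin d) → Fin k)
    (hc : ∀ u ∈ S, ∀ v ∈ S, u ≠ v → dist u v ≤ r → c u ≠ c v) :
    S.card ≤ maxColorable d k r V :=
  le_csSup ⟨V.card, by rintro _ ⟨T, hT, rfl, -⟩; exact card_le_card hT⟩ ⟨S, hSV, rfl, c, hc⟩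

lemma maxColorable_le {V : Finset (EuclideanSpace ℝ (Fin d))} {m : ℕ}
    (h : ∀ S ⊆ V, ∀ c : EuclideanSpace ℝ (Fin d) → Fin k,
      (∀ u ∈ S, ∀ v ∈ S, u ≠ v → dist u v ≤ r → c u ≠ c v) → S.card ≤ m) :
    maxColorable d k r V ≤ m :=
  csSup_le' <| by rintro _ ⟨S, hS, rfl, c, hc⟩; exact h S hS c hc

lemma maxColorable_le_card (V : Finset (EuclideanSpace ℝ (Fin d))) :
    maxColorable d k r V ≤ V.card :=
  maxColorable_le fun _ hS _ _ => card_le_card hS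

lemma maxColorable_anti {r₁ r₂ : ℝ} (h : r₁ ≤ r₂) (V : Finset (EuclideanSpace ℝ (Fin d))) :
    maxColorable d k r₂ V ≤ maxColorable d k r₁ V :=
  maxColorable_le fun _ hS c hc =>
    le_maxColorable hS c fun u hu v hv huv hdist => hc u hu v hv huv (hdist.trans h)

end Coloring

section IndexColoring

variable {E : Type*} [MetricSpace E] {n k : ℕ}

def IsProperColoringOn (r : ℝ) (x : Fin n → E) (T : Finset (Fin n)) (c : Fin n → Fin k) :
    Prop :=
  Set.InjOn x T ∧ ∀ i ∈ T, ∀ j ∈ T, i ≠ j → dist (x i) (x j) ≤ r → c i ≠ c j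

open Classical in
/-- `maxColorable` of the points `x i`, rewritten as a maximum over the finite type of index
sets and index colourings, so that it is visibly measurable in `x`. -/
noncomputable def maxColorableIndex (k : ℕ) (r : ℝ) (x : Fin n → E) : ℕ :=
  univ.sup fun p : Finset (Fin n) × (Fin n → Fin k) =>
    if IsProperColoringOn r x p.1 p.2 then p.1.card else 0

lemma measurable_maxColorableIndex [MeasurableSpace E] [BorelSpace E]
    [SecondCountableTopology E] (k : ℕ) (r : ℝ) :
    Measurable (maxColorableIndex k r : (Fin n → E) → ℕ) := by
  classical
  have hproper (p : Finset (Fin n) × (Fin n → Fin k)) :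
      MeasurableSet {x : Fin n → E | IsProperColoringOn r x p.1 p.2} := by
    simp only [IsProperColoringOn, Set.InjOn, Finset.mem_coe]
    exact measurableSet_setOfPred.mpr (by fun_prop)
  have hsup := Finset.sup_induction (p := Measurable) (f := fun p (x : Fin n → E) =>
      if IsProperColoringOn r x p.1 p.2 then p.1.card else 0) (s := univ)
    measurable_const (fun _ h₁ _ h₂ => h₁.sup h₂)
    (fun p _ => Measurable.ite (hproper p) measurable_const measurable_const)
  convert hsup using 1
  ext x
  simp [maxColorableIndex, Finset.sup_apply]

end IndexColoring

section PointFamily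

variable {d k n : ℕ}

lemma maxColorable_image_eq_maxColorableIndex (r : ℝ) (x : Fin n → EuclideanSpace ℝ (Fin d)) :
    maxColorable d k r (univ.image x) = maxColorableIndex k r x := by
  classical
  apply le_antisymm
  · refine maxColorable_le fun S hS c hc => ?_
    obtain ⟨T, -, hxT, rfl⟩ := exists_subset_injOn_image_eq_of_surjOn (f := x) Set.univ S
      fun y hy => by simpa using hS hy
    have hproper : IsProperColoringOn r x T (c ∘ x) := ⟨hxT, fun i hi j hj hij hdist =>
      hc _ (mem_image_of_mem x hi) _ (mem_image_of_mem x hj) (hxT.ne hi hj hij) hdist⟩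
    rw [card_image_of_injOn hxT]
    exact le_sup_of_le (f := fun p : Finset (Fin n) × (Fin n → Fin k) =>
      if IsProperColoringOn r x p.1 p.2 then p.1.card else 0) (mem_univ (T, c ∘ x))
      (by simp [hproper])
  · refine Finset.sup_le fun ⟨T, c₀⟩ _ => ?_
    split_ifs with hproper
    · obtain rfl | ⟨i₀, -⟩ := T.eq_empty_or_nonempty
      · exact Nat.zero_le _
      obtain ⟨hxT, hc₀⟩ := hproper
      have hinj : Function.Injective fun i : T => x i := Set.injOn_iff_injective.mp hxT
      set c := Function.extend (fun i : T => x i) (fun i => c₀ i) fun _ => c₀ i₀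
      have hc (i : Fin n) (hi : i ∈ T) : c (x i) = c₀ i := hinj.extend_apply _ _ ⟨i, hi⟩
      rw [← card_image_of_injOn hxT]
      refine le_maxColorable (image_subset_image (subset_univ T)) c ?_
      simp only [mem_image]
      rintro _ ⟨i, hi, rfl⟩ _ ⟨j, hj, rfl⟩ hne hdist
      rw [hc i hi, hc j hj]
      exact hc₀ i hi j hj (fun h => hne (h ▸ rfl)) hdist
    · exact Nat.zero_le _

lemma measurable_maxColorable_image (r : ℝ) :
    Measurable fun x : Fin n → EuclideanSpace ℝ (Fin d) => maxColorable d k r (univ.image x) := by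
  simp_rw [maxColorable_image_eq_maxColorableIndex]
  exact measurable_maxColorableIndex k r

lemma maxColorable_image_le (r : ℝ) (x : Fin n → EuclideanSpace ℝ (Fin d)) :
    maxColorable d k r (univ.image x) ≤ n :=
  (maxColorable_le_card _).trans (card_image_le.trans (card_fin n).le)

lemma integrable_maxColorable_image (r : ℝ) (μ : Measure (Fin n → EuclideanSpace ℝ (Fin d)))
    [IsFiniteMeasure μ] :
    Integrable (fun x => (maxColorable d k r (univ.image x) : ℝ)) μ :=
  .of_bound (measurable_from_nat.comp (measurable_maxColorable_image r)).aestronglyMeasurable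
    n <| .of_forall fun x => by simpa using maxColorable_image_le r x

end PointFamily

lemma volume_unitCube (d : ℕ) : volume (unitCube d) = 1 := by
  have hcube : unitCube d = WithLp.ofLp ⁻¹' Set.univ.pi fun _ : Fin d => Set.Icc (0 : ℝ) 1 := by
    ext x
    simp only [unitCube, Set.mem_ofPred_eq, Set.mem_preimage, Set.mem_univ_pi]
  rw [hcube, (PiLp.volume_preserving_ofLp _).measure_preimage
    (MeasurableSet.univ_pi fun _ => measurableSet_Icc).nullMeasurableSet, volume_pi_pi]
  simp

instance (d : ℕ) : IsProbabilityMeasure (uniformCube d) :=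
  ⟨by rw [uniformCube, Measure.restrict_apply_univ, volume_unitCube]⟩

lemma summable_poissonPMFReal_mul_self (μ : NNReal) :
    Summable fun n : ℕ => poissonPMFReal μ n * n := by
  refine (summable_nat_add_iff 1).mp ?_
  have hshift : (fun n : ℕ => poissonPMFReal μ (n + 1) * ↑(n + 1)) =
      fun n => μ * poissonPMFReal μ n := by
    ext n
    simp only [poissonPMFReal, pow_succ, Nat.factorial_succ]
    push_cast
    field_simp
  rw [hshift]
  exact (hasSum_one_poissonMeasure μ).summable.mul_left _

section Expectation

variable {d k : ℕ}

lemma EH_nonneg (r : ℝ) (n : ℕ) : 0 ≤ EH d k r n :=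
  integral_nonneg fun _ => Nat.cast_nonneg _

lemma EH_le (r : ℝ) (n : ℕ) : EH d k r n ≤ n := by
  have hbound (x : Fin n → EuclideanSpace ℝ (Fin d)) :
      ‖(maxColorable d k r (univ.image x) : ℝ)‖ ≤ n := by
    simpa using maxColorable_image_le r x
  simpa [EH] using (Real.le_norm_self _).trans
    (norm_integral_le_of_norm_le_const (μ := Measure.pi fun _ => uniformCube d)
      (.of_forall hbound))

lemma EH_anti {r₁ r₂ : ℝ} (h : r₁ ≤ r₂) (n : ℕ) : EH d k r₂ n ≤ EH d k r₁ n :=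
  integral_mono (integrable_maxColorable_image r₂ _) (integrable_maxColorable_image r₁ _)
    fun _ => Nat.cast_le.mpr (maxColorable_anti h _)

lemma summable_poissonPMFReal_mul_EH (μ : NNReal) (r : ℝ) :
    Summable fun n : ℕ => poissonPMFReal μ n * EH d k r n :=
  (summable_poissonPMFReal_mul_self μ).of_nonneg_of_le
    (fun n => mul_nonneg poissonPMFReal_nonneg (EH_nonneg r n))
    (fun n => mul_le_mul_of_nonneg_left (EH_le r n) poissonPMFReal_nonneg)

lemma Fbar_nonneg {lam t : ℝ} (hlam : 0 ≤ lam) (ht : 0 ≤ t) : 0 ≤ Fbar d k lam t :=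
  div_nonneg (tsum_nonneg fun n => mul_nonneg poissonPMFReal_nonneg (EH_nonneg _ n))
    (mul_nonneg hlam (pow_nonneg ht d))

lemma Fbar_le_Fbar_of_mul_pow_eq {lam₁ lam₂ t₁ t₂ : ℝ} (hmean : lam₁ * t₁ ^ d = lam₂ * t₂ ^ d)
    (hlam₁ : 0 ≤ lam₁) (ht₁ : 0 < t₁) (ht : t₁ ≤ t₂) : Fbar d k lam₁ t₁ ≤ Fbar d k lam₂ t₂ := by
  have hEF : EF d k lam₁ t₁ ≤ EF d k lam₂ t₂ := by
    rw [EF, EF, hmean]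
    exact (summable_poissonPMFReal_mul_EH _ _).tsum_le_tsum
      (fun n => mul_le_mul_of_nonneg_left (EH_anti (one_div_le_one_div_of_le ht₁ ht) n)
        poissonPMFReal_nonneg)
      (summable_poissonPMFReal_mul_EH _ _)
  rw [Fbar, Fbar, ← hmean]
  exact div_le_div_of_nonneg_right hEF (mul_nonneg hlam₁ (pow_nonneg ht₁.le d))

lemma aConst_antitoneOn (hd : 0 < d) : AntitoneOn (aConst d k) (Set.Ioi 0) := by
  intro lam₁ hlam₁ lam₂ hlam₂ hle
  rw [Set.mem_Ioi] at hlam₁ hlam₂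
  have hbdd : BddBelow {x : ℝ | ∃ t : ℝ, 0 < t ∧ x = Fbar d k lam₂ t} :=
    ⟨0, by rintro _ ⟨t, ht, rfl⟩; exact Fbar_nonneg hlam₂.le ht.le⟩
  refine le_csInf ⟨_, 1, one_pos, rfl⟩ ?_
  rintro _ ⟨s, hs, rfl⟩
  set θ := (lam₁ / lam₂) ^ (d : ℝ)⁻¹
  have hθ : θ ^ d = lam₁ / lam₂ := Real.rpow_inv_natCast_pow (by positivity) hd.ne'
  have hθ_le : θ ≤ 1 := Real.rpow_le_one (by positivity) (div_le_one_of_le₀ hle hlam₂.le)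
    (by positivity)
  have hmean : lam₂ * (θ * s) ^ d = lam₁ * s ^ d := by
    rw [mul_pow, hθ]
    field_simp
  calc aConst d k lam₂ ≤ Fbar d k lam₂ (θ * s) := csInf_le hbdd ⟨_, by positivity, rfl⟩
    _ ≤ Fbar d k lam₁ s :=
      Fbar_le_Fbar_of_mul_pow_eq hmean hlam₂.le (by positivity)
        (mul_le_of_le_one_left hs.le hθ_le)

end Expectation

theorem aConst_le_general (d k : ℕ) (hd : 1 ≤ d) (lam : ℝ) (hlam : 0 < lam)
    (ε : ℝ) (hε : 0 < ε) :
    aConst d k (lam * (1 + ε)) ≤ aConst d k lam + ε := by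
  have hmono : aConst d k (lam * (1 + ε)) ≤ aConst d k lam :=
    aConst_antitoneOn hd hlam (mul_pos hlam (by linarith))
      (le_mul_of_one_le_right hlam.le (by linarith))
  linarith

/-- `a_{k,λ(1+ε)} ≤ a_{k,λ} + ε`. -/
theorem aConst_le (d k : ℕ) (hd : 1 ≤ d) (hk : 1 ≤ k) (lam : ℝ) (hlam : 0 < lam)
    (ε : ℝ) (hε : 0 < ε) :
    aConst d k (lam * (1 + ε)) ≤ aConst d k lam + ε :=
  aConst_le_general d k hd lam hlam ε hε
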